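/- Let n ≥ 2 and let p be a real number with −n ≤ p < ∞ and p ≠ 1. Suppose (K_i) is a sequence of convex bodies in ℝ^n converging in the Hausdorff distance to a convex body K_∞. For each i let x_i be the unique interior point of K_i satisfying ∫_{S^{n−1}} (h_{K_i}(u) − ⟨x_i,u⟩)^{p−1} u dσ(u) = 0, and let x_∞ be the corresponding point for K_∞. Then x_i → x_∞ as i → ∞. -/

import Mathlib

open MeasureTheory Metric Filter

noncomputable section

/-- The support function of a set `K ⊆ ℝⁿ`, as a function of `u`:
`h_K(u) = sup { ⟨y, u⟩ : y ∈ K }`. -/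
def suppFn {n : ℕ} (K : Set (EuclideanSpace ℝ (Fin n))) (u : EuclideanSpace ℝ (Fin n)) : ℝ :=
  sSup ((fun y => (inner ℝ y u : ℝ)) '' K)

/-- The spherical Lebesgue measure `σ` on the unit sphere `S^{n-1} ⊆ ℝⁿ`. -/
def sphMeasure (n : ℕ) : Measure (sphere (0 : EuclideanSpace ℝ (Fin n)) 1) :=
  (volume : Measure (EuclideanSpace ℝ (Fin n))).toSphere

/-!
Write `q = p - 1` and `F_K(z) = ∫ (h_K(u) - ⟨z, u⟩)^q u dσ(u)`, so that `e_p(K)` is the zero of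
`F_K` in the interior of `K`. Since `t ↦ q t^q` is strictly increasing, `F_K` is strongly monotone:
as long as the gaps `h_K(u) - ⟨z, u⟩` stay in a range `(0, M]`, one of them even in `[m, M]`,
`q ⟨y - x, F_K(x) - F_K(y)⟩ ≥ c ∫ ⟨x - y, u⟩² dσ ≥ c c₁ |x - y|²`.
Take `K = K_i`, `x = x_i`, `y = x_∞`: then `F_{K_i}(x_i) = 0 = F_{K_∞}(x_∞)`, and since
`|h_{K_i} - h_{K_∞}| ≤ d_H(K_i, K_∞)` on the sphere and `t ↦ t^q` is Lipschitz on `[m, M]`,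
`|F_{K_i}(x_∞)| = O(d_H(K_i, K_∞))`. Hence `|x_i - x_∞| = O(d_H(K_i, K_∞)) → 0`.
-/

open Set Bornology Topology
open scoped RealInnerProductSpace

namespace Real

lemma exists_abs_rpow_sub_rpow_le (q : ℝ) {A B : ℝ} (hA : 0 < A) :
    ∃ C ≥ 0, ∀ a ∈ Icc A B, ∀ b ∈ Icc A B, |a ^ q - b ^ q| ≤ C * |a - b| := by
  have hpos : ∀ t ∈ Icc A B, t ≠ 0 := fun t ht => (hA.trans_le ht.1).ne'
  obtain ⟨C, hC⟩ := isCompact_Icc.exists_bound_of_continuousOn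
    (f := fun t => q * t ^ (q - 1)) <|
      continuousOn_const.mul (continuousOn_id.rpow_const fun t ht => .inl (hpos t ht))
  refine ⟨max C 0, le_max_right _ _, fun a ha b hb => ?_⟩
  simpa only [Real.norm_eq_abs] using (convex_Icc A B).norm_image_sub_le_of_norm_deriv_le
    (fun t ht => (hasDerivAt_rpow_const (.inl (hpos t ht))).differentiableAt)
    (fun t ht => by simpa only [deriv_rpow_const] using (hC t ht).trans (le_max_left C 0)) hb ha

lemma mul_rpow_sub_rpow_nonneg (q : ℝ) {a b : ℝ} (ha : 0 < a) (hab : a ≤ b) :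
    0 ≤ q * (b ^ q - a ^ q) := by
  rcases le_total 0 q with hq | hq
  · exact mul_nonneg hq (sub_nonneg.2 (rpow_le_rpow ha.le hab hq))
  · exact mul_nonneg_of_nonpos_of_nonpos hq (sub_nonpos.2 (rpow_le_rpow_of_nonpos ha hab hq))

lemma exists_sq_le_mul_rpow_sub_rpow_mul_sub {q A B : ℝ} (hq : q ≠ 0) (hA : 0 < A) :
    ∃ c > 0, ∀ a ∈ Icc A B, ∀ b ∈ Icc A B, c * (a - b) ^ 2 ≤ q * (a ^ q - b ^ q) * (a - b) := by
  rcases lt_or_ge B A with hBA | hAB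
  · exact ⟨1, one_pos, fun a ha b _ => absurd (ha.1.trans ha.2) hBA.not_ge⟩
  have hpos : ∀ t ∈ Icc A B, 0 < t := fun t ht => hA.trans_le ht.1
  obtain ⟨t₀, ht₀, hmin⟩ := isCompact_Icc.exists_isMinOn (nonempty_Icc.2 hAB)
    (f := fun t => q * q * t ^ (q - 1)) <|
      continuousOn_const.mul (continuousOn_id.rpow_const fun t ht => .inl (hpos t ht).ne')
  refine ⟨q * q * t₀ ^ (q - 1), mul_pos (mul_self_pos.2 hq) (rpow_pos_of_pos (hpos t₀ ht₀) _),
    ?_⟩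
  have hmono := (convex_Icc A B).mul_sub_le_image_sub_of_le_deriv (f := fun t => q * t ^ q)
    (continuousOn_const.mul (continuousOn_id.rpow_const fun t ht => .inl (hpos t ht).ne'))
    (fun t ht => ((hasDerivAt_rpow_const (.inl (hpos t (interior_subset ht)).ne')).const_mul q
      |>.differentiableAt.differentiableWithinAt))
    (fun t ht => by
      rw [deriv_const_mul _ (hasDerivAt_rpow_const (.inl (hpos t (interior_subset ht)).ne')
        |>.differentiableAt), deriv_rpow_const, ← mul_assoc]
      exact hmin (interior_subset ht))
  intro a ha b hb
  rcases le_total b a with hba | hab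
  · have := hmono b hb a ha hba
    nlinarith [sub_nonneg.2 hba]
  · have := hmono a ha b hb hab
    nlinarith [sub_nonneg.2 hab]

lemma exists_sq_le_mul_rpow_sub_rpow_mul_sub_of_pos {q m B : ℝ} (hq : q ≠ 0) (hm : 0 < m) :
    ∃ c > 0, ∀ a b, 0 < a → a ≤ B → b ∈ Icc m B →
      c * (a - b) ^ 2 ≤ q * (a ^ q - b ^ q) * (a - b) := by
  obtain ⟨c, hc, hcmono⟩ := exists_sq_le_mul_rpow_sub_rpow_mul_sub (B := B) hq (half_pos hm)
  refine ⟨c / 4, by positivity, fun a b ha haB hb => ?_⟩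
  have hb' : b ∈ Icc (m / 2) B := ⟨by linarith [hb.1], hb.2⟩
  rcases le_total (m / 2) a with ham | ham
  · have := hcmono a ⟨ham, haB⟩ b hb'
    nlinarith [sq_nonneg (a - b)]
  · -- compare with the endpoint `m / 2`, which is at least half as far from `b` as `a` is
    have hend := hcmono (m / 2) ⟨le_rfl, by linarith [hb.1, hb.2]⟩ b hb'
    have hlow := mul_rpow_sub_rpow_nonneg q ha ham
    have hs : 0 < b - m / 2 := by linarith [hb.1]
    have hX : c * (b - m / 2) ≤ q * (b ^ q - (m / 2) ^ q) := by
      refine le_of_mul_le_mul_right ?_ hs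
      nlinarith
    have hY : c * (b - a) / 2 ≤ q * (b ^ q - a ^ q) := by nlinarith [hb.1]
    nlinarith [sq_nonneg (b - a)]

end Real

section SphereIntegrals

variable {E : Type*} [NormedAddCommGroup E] [InnerProductSpace ℝ E] [FiniteDimensional ℝ E]
  [MeasurableSpace E] [BorelSpace E] (μ : Measure (sphere (0 : E) 1)) [IsFiniteMeasure μ]

lemma continuous_integral_inner_sq :
    Continuous fun v : E => ∫ u, ⟪v, (u : E)⟫ ^ 2 ∂μ := by
  simpa only [Measure.restrict_univ] using continuous_parametric_integral_of_continuous (μ := μ)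
    (f := fun (v : E) (u : sphere (0 : E) 1) => ⟪v, (u : E)⟫ ^ 2) (by fun_prop) isCompact_univ

lemma integral_inner_sq_pos [μ.IsOpenPosMeasure] {v : E} (hv : v ≠ 0) :
    0 < ∫ u, ⟪v, (u : E)⟫ ^ 2 ∂μ := by
  have hu : ‖v‖⁻¹ • v ∈ sphere (0 : E) 1 := by simp [norm_smul, hv]
  refine Continuous.integral_pos_of_hasCompactSupport_nonneg_nonzero (x := ⟨_, hu⟩) (by fun_prop)
    (.of_compactSpace _) (fun u => sq_nonneg _) ?_
  simp [real_inner_smul_right, hv]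

lemma exists_pos_mul_sq_le_integral_inner_sq [μ.IsOpenPosMeasure] :
    ∃ c > 0, ∀ v : E, c * ‖v‖ ^ 2 ≤ ∫ u, ⟪v, (u : E)⟫ ^ 2 ∂μ := by
  rcases subsingleton_or_nontrivial E with hE | hE
  · exact ⟨1, one_pos, fun v => by simp [Subsingleton.elim v 0]⟩
  obtain ⟨v₀, hv₀, hmin⟩ := (isCompact_sphere (0 : E) 1).exists_isMinOn
    (NormedSpace.sphere_nonempty.2 zero_le_one) (continuous_integral_inner_sq μ).continuousOn
  refine ⟨_, integral_inner_sq_pos μ (ne_zero_of_mem_sphere one_ne_zero ⟨v₀, hv₀⟩), fun v => ?_⟩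
  rcases eq_or_ne v 0 with rfl | hv
  · simp
  have hscale : ∫ u, ⟪v, (u : E)⟫ ^ 2 ∂μ = ‖v‖ ^ 2 * ∫ u, ⟪‖v‖⁻¹ • v, (u : E)⟫ ^ 2 ∂μ := by
    rw [← integral_const_mul]
    congr 1 with u
    rw [real_inner_smul_left, mul_pow, ← mul_assoc, ← mul_pow,
      mul_inv_cancel₀ (norm_ne_zero_iff.2 hv), one_pow, one_mul]
  rw [hscale, mul_comm]
  exact mul_le_mul_of_nonneg_left (hmin (by simp [norm_smul, hv])) (sq_nonneg _)

variable {μ}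

lemma integrable_smul_coe {f : sphere (0 : E) 1 → ℝ} (hf : Continuous f) :
    Integrable (fun u => f u • (u : E)) μ :=
  (hf.smul continuous_subtype_val).integrable_of_hasCompactSupport (.of_compactSpace _)

lemma inner_integral_smul_coe {f : sphere (0 : E) 1 → ℝ} (hf : Continuous f) (v : E) :
    ⟪v, ∫ u, f u • (u : E) ∂μ⟫ = ∫ u, f u * ⟪v, (u : E)⟫ ∂μ := by
  rw [← integral_inner (integrable_smul_coe hf)]
  simp only [real_inner_smul_right]

lemma norm_integral_smul_coe_sub_le {f g : sphere (0 : E) 1 → ℝ} (hf : Continuous f)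
    (hg : Continuous g) {ε : ℝ} (hfg : ∀ u, |f u - g u| ≤ ε) :
    ‖∫ u, f u • (u : E) ∂μ - ∫ u, g u • (u : E) ∂μ‖ ≤ ε * μ.real univ := by
  rw [← integral_sub (integrable_smul_coe hf) (integrable_smul_coe hg)]
  refine norm_integral_le_of_norm_le_const (.of_forall fun u => ?_)
  rw [← sub_smul, norm_smul, norm_eq_of_mem_sphere u, mul_one, Real.norm_eq_abs]
  exact hfg u

lemma mul_integral_inner_sq_le {a b : sphere (0 : E) 1 → ℝ} {q c : ℝ} (ha : Continuous a)
    (hb : Continuous b) (ha₀ : ∀ u, 0 < a u) (hb₀ : ∀ u, 0 < b u) {v : E}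
    (hab : ∀ u, a u - b u = ⟪v, (u : E)⟫)
    (hc : ∀ u, c * (a u - b u) ^ 2 ≤ q * (a u ^ q - b u ^ q) * (a u - b u))
    (hbal : ∫ u, a u ^ q • (u : E) ∂μ = 0) :
    c * ∫ u, ⟪v, (u : E)⟫ ^ 2 ∂μ ≤ |q| * ‖v‖ * ‖∫ u, b u ^ q • (u : E) ∂μ‖ := by
  have haq : Continuous fun u => a u ^ q := ha.rpow_const fun u => .inl (ha₀ u).ne'
  have hbq : Continuous fun u => b u ^ q := hb.rpow_const fun u => .inl (hb₀ u).ne'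
  have hpair : ∫ u, (a u ^ q - b u ^ q) * ⟪v, (u : E)⟫ ∂μ = -⟪v, ∫ u, b u ^ q • (u : E) ∂μ⟫ := by
    rw [← inner_integral_smul_coe (f := fun u => a u ^ q - b u ^ q) (haq.sub hbq)]
    simp_rw [sub_smul]
    rw [integral_sub (integrable_smul_coe haq) (integrable_smul_coe hbq), hbal, zero_sub,
      inner_neg_right]
  calc c * ∫ u, ⟪v, (u : E)⟫ ^ 2 ∂μ
      = ∫ u, c * (a u - b u) ^ 2 ∂μ := by simp only [hab, integral_const_mul]
    _ ≤ ∫ u, q * (a u ^ q - b u ^ q) * (a u - b u) ∂μ :=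
        integral_mono (((ha.sub hb).pow 2).const_smul c
          |>.integrable_of_hasCompactSupport (.of_compactSpace _))
          ((by fun_prop : Continuous fun u => q * (a u ^ q - b u ^ q) * (a u - b u))
            |>.integrable_of_hasCompactSupport (.of_compactSpace _)) hc
    _ = -(q * ⟪v, ∫ u, b u ^ q • (u : E) ∂μ⟫) := by
        simp only [hab, mul_assoc, integral_const_mul, hpair, mul_neg]
    _ ≤ |q| * ‖v‖ * ‖∫ u, b u ^ q • (u : E) ∂μ‖ := by
        rw [mul_assoc]
        exact (neg_le_abs _).trans (by rw [abs_mul]; gcongr; exact abs_real_inner_le_norm _ _)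

end SphereIntegrals

section SupportFunction

variable {n : ℕ} {K L : Set (EuclideanSpace ℝ (Fin n))} {u y z : EuclideanSpace ℝ (Fin n)}
  {c r R : ℝ}

lemma bddAbove_inner_image (hK : IsBounded K) (u : EuclideanSpace ℝ (Fin n)) :
    BddAbove ((fun y => ⟪y, u⟫) '' K) := by
  obtain ⟨R, hR⟩ := hK.exists_norm_le
  refine ⟨R * ‖u‖, ?_⟩
  rintro _ ⟨y, hy, rfl⟩
  exact (real_inner_le_norm y u).trans (by gcongr; exact hR y hy)

lemma inner_le_suppFn (hK : IsBounded K) (hy : y ∈ K) : ⟪y, u⟫ ≤ suppFn K u :=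
  le_csSup (bddAbove_inner_image hK u) ⟨y, hy, rfl⟩

lemma suppFn_le (hK : K.Nonempty) (h : ∀ y ∈ K, ⟪y, u⟫ ≤ c) : suppFn K u ≤ c :=
  csSup_le (hK.image _) (by rintro _ ⟨y, hy, rfl⟩; exact h y hy)

lemma suppFn_le_mul_norm (hK : K.Nonempty) (hR : K ⊆ closedBall 0 R) : suppFn K u ≤ R * ‖u‖ :=
  suppFn_le hK fun y hy => (real_inner_le_norm y u).trans <| by
    gcongr; simpa using hR hy

lemma suppFn_le_add_mul_norm_sub (hK : IsBounded K) (hKne : K.Nonempty)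
    (hR : K ⊆ closedBall 0 R) (u v : EuclideanSpace ℝ (Fin n)) :
    suppFn K u ≤ suppFn K v + R * ‖u - v‖ :=
  suppFn_le hKne fun y hy => by
    have h₁ : ⟪y, u - v⟫ ≤ R * ‖u - v‖ :=
      (real_inner_le_norm y _).trans (by gcongr; simpa using hR hy)
    have h₂ := inner_le_suppFn (u := v) hK hy
    rw [inner_sub_right] at h₁
    linarith

lemma lipschitzWith_suppFn (hK : IsBounded K) (hKne : K.Nonempty) (hR : K ⊆ closedBall 0 R) :
    LipschitzWith (Real.toNNReal R) (suppFn K) :=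
  .of_le_add_mul' R fun u v => by
    simpa only [dist_eq_norm] using suppFn_le_add_mul_norm_sub hK hKne hR u v

lemma continuous_suppFn (hK : IsBounded K) (hKne : K.Nonempty) : Continuous (suppFn K) := by
  obtain ⟨R, hR⟩ := hK.subset_closedBall 0
  exact (lipschitzWith_suppFn hK hKne hR).continuous

lemma suppFn_le_add_hausdorffDist (hK : IsBounded K) (hL : IsBounded L) (hKne : K.Nonempty)
    (hLne : L.Nonempty) : suppFn K u ≤ suppFn L u + hausdorffDist K L * ‖u‖ := by
  have hfin := hausdorffEDist_ne_top_of_nonempty_of_bounded hKne hLne hK hL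
  have hlim : Tendsto (fun s => suppFn L u + s * ‖u‖) (𝓝[>] hausdorffDist K L)
      (𝓝 (suppFn L u + hausdorffDist K L * ‖u‖)) :=
    (Continuous.tendsto (by fun_prop) _).mono_left nhdsWithin_le_nhds
  refine ge_of_tendsto hlim (eventually_nhdsWithin_of_forall fun s hs => suppFn_le hKne ?_)
  intro y hy
  obtain ⟨z, hz, hyz⟩ := exists_dist_lt_of_hausdorffDist_lt hy hs hfin
  have h₁ : ⟪y - z, u⟫ ≤ s * ‖u‖ :=
    (real_inner_le_norm _ _).trans (by gcongr; exact (dist_eq_norm y z ▸ hyz).le)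
  have h₂ := inner_le_suppFn (u := u) hL hz
  rw [inner_sub_left] at h₁
  linarith

lemma abs_suppFn_sub_le (hK : IsBounded K) (hL : IsBounded L) (hKne : K.Nonempty)
    (hLne : L.Nonempty) : |suppFn K u - suppFn L u| ≤ hausdorffDist K L * ‖u‖ := by
  have h₁ := suppFn_le_add_hausdorffDist (u := u) hK hL hKne hLne
  have h₂ := suppFn_le_add_hausdorffDist (u := u) hL hK hLne hKne
  rw [hausdorffDist_comm] at h₂
  exact abs_sub_le_iff.2 ⟨by linarith, by linarith⟩

lemma inner_add_le_suppFn (hK : IsBounded K) (hr : 0 ≤ r) (hzK : closedBall z r ⊆ K)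
    (hu : ‖u‖ = 1) : ⟪z, u⟫ + r ≤ suppFn K u := by
  have hmem : z + r • u ∈ K := hzK (by simp [norm_smul, hu, abs_of_nonneg hr])
  simpa [inner_add_left, real_inner_smul_left, real_inner_self_eq_norm_sq, hu] using
    inner_le_suppFn (u := u) hK hmem

lemma suppFn_sub_inner_le (hK : IsBounded K) (hz : z ∈ K) :
    suppFn K u - ⟪z, u⟫ ≤ suppFn K u + suppFn K (-u) := by
  have := inner_le_suppFn (u := -u) hK hz
  rw [inner_neg_right] at this
  linarith

end SupportFunction

section GapIntegral

variable {n : ℕ}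

instance : IsFiniteMeasure (sphMeasure n) := by unfold sphMeasure; infer_instance

instance : (sphMeasure n).IsOpenPosMeasure := by unfold sphMeasure; infer_instance

def gapIntegral (K : Set (EuclideanSpace ℝ (Fin n))) (q : ℝ) (z : EuclideanSpace ℝ (Fin n)) :
    EuclideanSpace ℝ (Fin n) :=
  ∫ u : sphere (0 : EuclideanSpace ℝ (Fin n)) 1,
    (suppFn K u - ⟪z, (u : EuclideanSpace ℝ (Fin n))⟫) ^ q • (u : EuclideanSpace ℝ (Fin n))
    ∂sphMeasure n

lemma continuous_suppFn_sub_inner {K : Set (EuclideanSpace ℝ (Fin n))} (hK : IsBounded K)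
    (hKne : K.Nonempty) (z : EuclideanSpace ℝ (Fin n)) :
    Continuous fun u : sphere (0 : EuclideanSpace ℝ (Fin n)) 1 =>
      suppFn K u - ⟪z, (u : EuclideanSpace ℝ (Fin n))⟫ := by
  have := continuous_suppFn hK hKne
  fun_prop

lemma suppFn_sub_inner_bounds {K L : Set (EuclideanSpace ℝ (Fin n))}
    {x y w : EuclideanSpace ℝ (Fin n)} {ρ r R : ℝ} (hK : IsBounded K) (hL : IsBounded L)
    (hρ : 0 ≤ ρ) (hxK : closedBall x ρ ⊆ K) (hr : 0 ≤ r) (hyL : closedBall y r ⊆ L)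
    (hR : L ⊆ closedBall 0 R) (hd : hausdorffDist K L ≤ r / 2) (hw : ‖w‖ = 1) :
    ρ ≤ suppFn K w - ⟪x, w⟫ ∧ suppFn K w - ⟪x, w⟫ ≤ 2 * R + r ∧
      suppFn K w - ⟪y, w⟫ ∈ Icc (r / 2) (2 * R + r) ∧
      suppFn L w - ⟪y, w⟫ ∈ Icc (r / 2) (2 * R + r) := by
  have hKne : K.Nonempty := ⟨x, hxK (mem_closedBall_self hρ)⟩
  have hLne : L.Nonempty := ⟨y, hyL (mem_closedBall_self hr)⟩
  have hxρ := inner_add_le_suppFn hK hρ hxK hw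
  have hxw := suppFn_sub_inner_le (u := w) hK (hxK (mem_closedBall_self hρ))
  have hyr := inner_add_le_suppFn hL hr hyL hw
  have hyw := suppFn_sub_inner_le (u := w) hL (hyL (mem_closedBall_self hr))
  have hRw : suppFn L w ≤ R := by simpa [hw] using suppFn_le_mul_norm (u := w) hLne hR
  have hRw' : suppFn L (-w) ≤ R := by simpa [hw] using suppFn_le_mul_norm (u := -w) hLne hR
  have hdw := abs_le.1 (abs_suppFn_sub_le (u := w) hK hL hKne hLne)
  have hdw' := abs_le.1 (abs_suppFn_sub_le (u := -w) hK hL hKne hLne)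
  rw [hw] at hdw
  rw [norm_neg, hw] at hdw'
  refine ⟨by linarith, by linarith, ⟨by linarith, by linarith⟩, ⟨by linarith, by linarith⟩⟩

theorem exists_norm_sub_le_mul_hausdorffDist {L : Set (EuclideanSpace ℝ (Fin n))}
    {y : EuclideanSpace ℝ (Fin n)} {q r : ℝ} (hq : q ≠ 0) (hL : IsBounded L) (hr : 0 < r)
    (hyL : closedBall y r ⊆ L) (hy : gapIntegral L q y = 0) :
    ∃ C, ∀ (K : Set (EuclideanSpace ℝ (Fin n))) (x : EuclideanSpace ℝ (Fin n)), IsBounded K →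
      x ∈ interior K → gapIntegral K q x = 0 → hausdorffDist K L ≤ r / 2 →
        ‖x - y‖ ≤ C * hausdorffDist K L := by
  obtain ⟨R, hR⟩ := hL.subset_closedBall 0
  obtain ⟨c, hc, hcmono⟩ :=
    Real.exists_sq_le_mul_rpow_sub_rpow_mul_sub_of_pos (B := 2 * R + r) hq (half_pos hr)
  obtain ⟨Λ, hΛ, hlip⟩ := Real.exists_abs_rpow_sub_rpow_le q (B := 2 * R + r) (half_pos hr)
  obtain ⟨c₁, hc₁, hquad⟩ := exists_pos_mul_sq_le_integral_inner_sq (sphMeasure n)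
  set T := (sphMeasure n).real univ
  refine ⟨|q| * (Λ * T) / (c * c₁), fun K x hK hxK hx hd => ?_⟩
  set d := hausdorffDist K L
  obtain ⟨ρ, hρ, hρK⟩ := nhds_basis_closedBall.mem_iff.1 (mem_interior_iff_mem_nhds.1 hxK)
  have hKne : K.Nonempty := ⟨x, interior_subset hxK⟩
  have hLne : L.Nonempty := ⟨y, hyL (mem_closedBall_self hr.le)⟩
  have hgap := fun u : sphere (0 : EuclideanSpace ℝ (Fin n)) 1 => suppFn_sub_inner_bounds
    hK hL hρ.le hρK hr.le hyL hR hd (norm_eq_of_mem_sphere u)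
  have hG : ‖gapIntegral K q y‖ ≤ Λ * d * T := by
    rw [← sub_zero (gapIntegral K q y), ← hy]
    refine norm_integral_smul_coe_sub_le
      ((continuous_suppFn_sub_inner hK hKne y).rpow_const fun u => .inl (by
        linarith [(hgap u).2.2.1.1]))
      ((continuous_suppFn_sub_inner hL hLne y).rpow_const fun u => .inl (by
        linarith [(hgap u).2.2.2.1]))
      fun u => (hlip _ (hgap u).2.2.1 _ (hgap u).2.2.2).trans (mul_le_mul_of_nonneg_left ?_ hΛ)
    simpa [sub_sub_sub_cancel_right, norm_eq_of_mem_sphere u] using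
      abs_suppFn_sub_le (u := u) hK hL hKne hLne
  have hmono := mul_integral_inner_sq_le (μ := sphMeasure n) (q := q) (v := y - x)
    (continuous_suppFn_sub_inner hK hKne x) (continuous_suppFn_sub_inner hK hKne y)
    (fun u => hρ.trans_le (hgap u).1) (fun u => by linarith [(hgap u).2.2.1.1])
    (fun u => by rw [inner_sub_left]; ring)
    (fun u => hcmono _ _ (hρ.trans_le (hgap u).1) (hgap u).2.1 (hgap u).2.2.1) hx
  rw [gapIntegral] at hG
  have hsq : ‖y - x‖ * (c * c₁) * ‖y - x‖ ≤ |q| * (Λ * T) * d * ‖y - x‖ :=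
    calc ‖y - x‖ * (c * c₁) * ‖y - x‖ = c * (c₁ * ‖y - x‖ ^ 2) := by ring
      _ ≤ c * ∫ u, ⟪y - x, (u : EuclideanSpace ℝ (Fin n))⟫ ^ 2 ∂sphMeasure n := by
          gcongr; exact hquad (y - x)
      _ ≤ |q| * ‖y - x‖ * (Λ * d * T) := hmono.trans (by gcongr)
      _ = |q| * (Λ * T) * d * ‖y - x‖ := by ring
  rw [norm_sub_rev, div_mul_eq_mul_div, le_div_iff₀ (by positivity)]
  rcases (norm_nonneg (y - x)).eq_or_lt with hxy | hxy
  · rw [← hxy, zero_mul]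
    have : 0 ≤ T := measureReal_nonneg
    have : 0 ≤ d := hausdorffDist_nonneg
    positivity
  · exact le_of_mul_le_mul_right hsq hxy

end GapIntegral

theorem statement_11_general {n : ℕ} (p : ℝ) (hp1 : p ≠ 1)
    (K : ℕ → Set (EuclideanSpace ℝ (Fin n)))
    (hK_comp : ∀ i, IsCompact (K i))
    (Klim : Set (EuclideanSpace ℝ (Fin n)))
    (hKl_comp : IsCompact Klim)
    (hconv : Tendsto (fun i => Metric.hausdorffDist (K i) Klim) atTop (nhds 0))
    (x : ℕ → EuclideanSpace ℝ (Fin n))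
    (hx_int : ∀ i, x i ∈ interior (K i))
    (hx_eq : ∀ i, (∫ u : sphere (0 : EuclideanSpace ℝ (Fin n)) 1, ((suppFn (K i) u - (inner ℝ (x i) (u : EuclideanSpace ℝ (Fin n)) : ℝ)) ^ (p - 1)) • (u : EuclideanSpace ℝ (Fin n)) ∂(sphMeasure n)) = 0)
    (xlim : EuclideanSpace ℝ (Fin n))
    (hxl_int : xlim ∈ interior Klim)
    (hxl_eq : (∫ u : sphere (0 : EuclideanSpace ℝ (Fin n)) 1, ((suppFn Klim u - (inner ℝ xlim (u : EuclideanSpace ℝ (Fin n)) : ℝ)) ^ (p - 1)) • (u : EuclideanSpace ℝ (Fin n)) ∂(sphMeasure n)) = 0) :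
    Tendsto x atTop (nhds xlim) := by
  obtain ⟨r, hr, hball⟩ := nhds_basis_closedBall.mem_iff.1 (mem_interior_iff_mem_nhds.1 hxl_int)
  obtain ⟨C, hC⟩ := exists_norm_sub_le_mul_hausdorffDist (sub_ne_zero.2 hp1)
    hKl_comp.isBounded hr hball hxl_eq
  have hbound : ∀ᶠ i in atTop, ‖x i - xlim‖ ≤ C * hausdorffDist (K i) Klim :=
    (hconv.eventually (ge_mem_nhds (half_pos hr))).mono fun i hi =>
      hC _ _ (hK_comp i).isBounded (hx_int i) (hx_eq i) hi
  rw [tendsto_iff_norm_sub_tendsto_zero]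
  exact squeeze_zero' (.of_forall fun _ => norm_nonneg _) hbound
    (by simpa using hconv.const_mul C)

/-- for `n ≥ 2` and `-n ≤ p < ∞`, `p ≠ 1`, the entropy point `e_p` is continuous:
if convex bodies `K i` converge in Hausdorff distance to `Klim`, and `x i` (resp. `xlim`) are the
interior points with vanishing vector integral, then `x i → xlim`. -/
theorem statement_11 {n : ℕ} (hn : 2 ≤ n) (p : ℝ) (hpl : -(n : ℝ) ≤ p) (hp1 : p ≠ 1)
    (K : ℕ → Set (EuclideanSpace ℝ (Fin n)))
    (hK_comp : ∀ i, IsCompact (K i)) (hK_conv : ∀ i, Convex ℝ (K i))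
    (hK_int : ∀ i, (interior (K i)).Nonempty)
    (Klim : Set (EuclideanSpace ℝ (Fin n)))
    (hKl_comp : IsCompact Klim) (hKl_conv : Convex ℝ Klim) (hKl_int : (interior Klim).Nonempty)
    (hconv : Tendsto (fun i => Metric.hausdorffDist (K i) Klim) atTop (nhds 0))
    (x : ℕ → EuclideanSpace ℝ (Fin n))
    (hx_int : ∀ i, x i ∈ interior (K i))
    (hx_eq : ∀ i, (∫ u : sphere (0 : EuclideanSpace ℝ (Fin n)) 1, ((suppFn (K i) u - (inner ℝ (x i) (u : EuclideanSpace ℝ (Fin n)) : ℝ)) ^ (p - 1)) • (u : EuclideanSpace ℝ (Fin n)) ∂(sphMeasure n)) = 0)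
    (hx_unique : ∀ i, ∀ z ∈ interior (K i), (∫ u : sphere (0 : EuclideanSpace ℝ (Fin n)) 1, ((suppFn (K i) u - (inner ℝ z (u : EuclideanSpace ℝ (Fin n)) : ℝ)) ^ (p - 1)) • (u : EuclideanSpace ℝ (Fin n)) ∂(sphMeasure n)) = 0 → z = x i)
    (xlim : EuclideanSpace ℝ (Fin n))
    (hxl_int : xlim ∈ interior Klim)
    (hxl_eq : (∫ u : sphere (0 : EuclideanSpace ℝ (Fin n)) 1, ((suppFn Klim u - (inner ℝ xlim (u : EuclideanSpace ℝ (Fin n)) : ℝ)) ^ (p - 1)) • (u : EuclideanSpace ℝ (Fin n)) ∂(sphMeasure n)) = 0)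
    (hxl_unique : ∀ z ∈ interior Klim, (∫ u : sphere (0 : EuclideanSpace ℝ (Fin n)) 1, ((suppFn Klim u - (inner ℝ z (u : EuclideanSpace ℝ (Fin n)) : ℝ)) ^ (p - 1)) • (u : EuclideanSpace ℝ (Fin n)) ∂(sphMeasure n)) = 0 → z = xlim) :
    Tendsto x atTop (nhds xlim) :=
  statement_11_general p hp1 K hK_comp Klim hKl_comp hconv x hx_int hx_eq xlim hxl_int hxl_eq
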